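/- Subexpression property: for states s, s' of the environment-based semantics, if s ⇓ s' or s → s' then exp_sup(s) ⊇ exp_sup(s'). -/

import Mathlib

/- Untyped λ-expressions. -/
inductive Exp : Type
  | var : String → Exp
  | app : Exp → Exp → Exp
  | lam : String → Exp → Exp
deriving DecidableEq

namespace Exp

/-- Free variables. -/
def fv : Exp → Finset String
  | var x => {x}
  | app e1 e2 => fv e1 ∪ fv e2
  | lam x e => fv e \ {x}

/-- The set of subexpressions of a λ-expression. -/
def subexp : Exp → Set Exp
  | var x => {var x}
  | app e1 e2 => insert (app e1 e2) (subexp e1 ∪ subexp e2)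
  | lam x e => insert (lam x e) (subexp e)

end Exp

/- Values (closures), environments and states of the environment-based
semantics.  An environment is a (partial) map from variable names to values;
a state `e:ρ` pairs an expression with an environment. -/
inductive Val : Type
  | clos : String → Exp → (String → Option Val) → Val

abbrev Env := String → Option Val
abbrev State := Exp × Env

/-- A value `λx.e:ρ` viewed as a state. -/
def Val.toState : Val → State
  | .clos x e ρ => (Exp.lam x e, ρ)

/-- The λ-expression component of a value. -/
def Val.toExp : Val → Exp
  | .clos x e _ => Exp.lam x e

def Env.update (ρ : Env) (x : String) (v : Val) : Env :=
  fun y => if y = x then some v else ρ y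

def Env.empty : Env := fun _ => none
/- Environment-based evaluation `s ⇓ v` and the call relations
`→r` (Operator), `→d` (Operand), `→c` (Call); (Apply) evaluates an
application via its `→c` call. -/
mutual
  inductive EvalE : State → Val → Prop
    | value (x : String) (e : Exp) (ρ : Env) :
        EvalE (Exp.lam x e, ρ) (Val.clos x e ρ)
    | var {ρ : Env} {x : String} {v : Val} :
        ρ x = some v → EvalE (Exp.var x, ρ) v
    | apply {s s' : State} {v : Val} :
        CallC s s' → EvalE s' v → EvalE s v
  inductive CallC : State → State → Prop
    | call {e1 e2 : Exp} {ρ ρ0 : Env} {x : String} {e0 : Exp} {v2 : Val} :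
        EvalE (e1, ρ) (Val.clos x e0 ρ0) → EvalE (e2, ρ) v2 →
        CallC (Exp.app e1 e2, ρ) (e0, Env.update ρ0 x v2)
end

inductive CallR : State → State → Prop
  | oper (e1 e2 : Exp) (ρ : Env) : CallR (Exp.app e1 e2, ρ) (e1, ρ)

inductive CallD : State → State → Prop
  | opnd {e1 : Exp} {ρ : Env} {v1 : Val} (e2 : Exp) :
      EvalE (e1, ρ) v1 → CallD (Exp.app e1 e2, ρ) (e2, ρ)

/-- The call relation `→` on states is `→r ∪ →d ∪ →c`. -/
def Call (s s' : State) : Prop := CallR s s' ∨ CallD s s' ∨ CallC s s'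
/-- `ExpSup s e'` means `e' ∈ exp_sup(s)`, where
`exp_sup(e:ρ) = subexp(e) ∪ ⋃_{x ∈ fv(e)} exp_sup(ρ(x))`. -/
inductive ExpSup : State → Exp → Prop
  | sub {e : Exp} {ρ : Env} {e' : Exp} :
      e' ∈ Exp.subexp e → ExpSup (e, ρ) e'
  | env {e : Exp} {ρ : Env} {x : String} {v : Val} {e' : Exp} :
      x ∈ e.fv → ρ x = some v → ExpSup v.toState e' → ExpSup (e, ρ) e'

/-!
Every evaluation or call step builds its target from pieces of its source: the operator and
the operand of `e₁ @ e₂ : ρ` are subexpressions, a variable is looked up in the environment, and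
the body `e₀` of a called closure `λx.e₀ : ρ₀` has, in `ρ₀[x ↦ v₂]`, support inside that of the
closure together with that of the argument value `v₂`. The supports of the closure and of `v₂`
lie in those of `e₁ : ρ` and `e₂ : ρ` by induction on the mutual derivation of `⇓` and `→c`.
-/

namespace ExpSup

variable {e₁ e₂ e₀ e' : Exp} {ρ ρ₀ : Env} {x : String} {v : Val}

theorem app_left (h : ExpSup (e₁, ρ) e') : ExpSup (Exp.app e₁ e₂, ρ) e' := by
  cases h with
  | sub hsub => exact .sub (Set.mem_insert_of_mem _ (Or.inl hsub))
  | env hfv hρ hv => exact .env (Finset.mem_union_left _ hfv) hρ hv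

theorem app_right (h : ExpSup (e₂, ρ) e') : ExpSup (Exp.app e₁ e₂, ρ) e' := by
  cases h with
  | sub hsub => exact .sub (Set.mem_insert_of_mem _ (Or.inr hsub))
  | env hfv hρ hv => exact .env (Finset.mem_union_right _ hfv) hρ hv

theorem of_body_update (h : ExpSup (e₀, ρ₀.update x v) e') :
    ExpSup (Exp.lam x e₀, ρ₀) e' ∨ ExpSup v.toState e' := by
  cases h with
  | sub hsub => exact Or.inl (.sub (Set.mem_insert_of_mem _ hsub))
  | @env _ _ y w _ hfv hρ hw =>
    by_cases hyx : y = x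
    · obtain rfl : w = v := by simpa [Env.update, hyx] using hρ.symm
      exact Or.inr hw
    · have hρ₀ : ρ₀ y = some w := by simpa [Env.update, hyx] using hρ
      exact Or.inl (.env (by simp [Exp.fv, hfv, hyx]) hρ₀ hw)

end ExpSup

mutual

theorem EvalE.expSup_of_val {s : State} {v : Val} {e' : Exp} :
    EvalE s v → ExpSup v.toState e' → ExpSup s e'
  | .value _ _ _, h => h
  | .var hρ, h => .env (Finset.mem_singleton_self _) hρ h
  | .apply hcall heval, h => hcall.expSup_of_target (heval.expSup_of_val h)

theorem CallC.expSup_of_target {s s' : State} {e' : Exp} :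
    CallC s s' → ExpSup s' e' → ExpSup s e'
  | .call hfun harg, h =>
    (ExpSup.of_body_update h).elim
      (fun hclos => (hfun.expSup_of_val hclos).app_left)
      (fun hval => (harg.expSup_of_val hval).app_right)

end

theorem Call.expSup_of_target {s s' : State} {e' : Exp} :
    Call s s' → ExpSup s' e' → ExpSup s e'
  | .inl (.oper _ _ _), h => h.app_left
  | .inr (.inl (.opnd _ _)), h => h.app_right
  | .inr (.inr hcall), h => hcall.expSup_of_target h

/-- Subexpression property: if `s ⇓ s'` or `s → s'` then
`exp_sup(s) ⊇ exp_sup(s')`. -/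
theorem subexpression_property :
    (∀ (s : State) (v : Val), EvalE s v →
      ∀ e', ExpSup v.toState e' → ExpSup s e') ∧
    (∀ s s' : State, Call s s' →
      ∀ e', ExpSup s' e' → ExpSup s e') :=
  ⟨fun _ _ heval _ => heval.expSup_of_val, fun _ _ hcall _ => hcall.expSup_of_target⟩
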